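/- arXiv:2111.12240 — 2 statements merged into one kernel-verified Lean document; each statement's English description precedes it below -/
import Mathlib

section
/- If T is a tree of order n, then pt_+(T) ≤ ⌈(n−1)/2⌉, with equality when T is a path. -/
/-!
In a tree two white neighbours of a blue vertex lie in different components of the white
subgraph, so a blue vertex forces all of its white neighbours at once. Starting from one blue
vertex `v`, the blue set after `t` rounds is therefore the ball of radius `t` about `v`, and
`pt_+(T)` is the radius of `T`.

If `v` has minimum eccentricity `r > 0` and `v'` is the neighbour of `v` towards a farthest
vertex `x`, some vertex `y` has distance at least `r` from `v'`, hence lies on the side of `v`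
at distance at least `r - 1` from it. The path from `x` through `v'` and `v` to `y` then has
at least `2r` vertices, so `2r ≤ n`. For a path on `n` vertices the diameter is `n - 1`, which
is at most twice the radius.
-/

open SimpleGraph Set

variable {V : Type*}

/-- The subgraph of `G` obtained by deleting the vertices of `B`
(kept as isolated vertices). -/
def delVerts (G : SimpleGraph V) (B : Set V) : SimpleGraph V where
  Adj a b := G.Adj a b ∧ a ∉ B ∧ b ∉ B
  symm := ⟨fun _ _ ⟨h, ha, hb⟩ => ⟨h.symm, hb, ha⟩⟩
  loopless := ⟨fun a ⟨h, _, _⟩ => G.irrefl h⟩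

/-- `u` may PSD-force `w` when the set of blue vertices is `B`:  `u` is blue, `w` is a white
neighbor of `u`, and `w` is the unique white neighbor of `u` in the component of `G - B`
containing `w`. -/
def PSDForce (G : SimpleGraph V) (B : Set V) (u w : V) : Prop :=
  u ∈ B ∧ w ∉ B ∧ G.Adj u w ∧
    ∀ x, G.Adj u x → x ∉ B → (delVerts G B).Reachable x w → x = w

/-- One round of simultaneous PSD forcing starting from blue set `B`. -/
def psdStep (G : SimpleGraph V) (B : Set V) : Set V :=
  B ∪ {w | ∃ u, PSDForce G B u w}

/-- `B` is a PSD forcing set of `G`. -/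
def IsPSDForcingSet (G : SimpleGraph V) (B : Set V) : Prop :=
  ∃ t, (psdStep G)^[t] B = Set.univ

/-- The PSD propagation time `pt_+(G; B)` of the set `B` in `G`. -/
noncomputable def psdPropTime (G : SimpleGraph V) (B : Set V) : ℕ :=
  sInf {t | (psdStep G)^[t] B = Set.univ}

/-- The PSD zero forcing number `Z_+(G)`. -/
noncomputable def psdZ (G : SimpleGraph V) : ℕ :=
  sInf {k | ∃ B : Set V, IsPSDForcingSet G B ∧ B.ncard = k}

/-- The `k`-PSD propagation time `pt_+(G, k)`: the minimum of `pt_+(G; B)` over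
PSD forcing sets `B` of size `k`. -/
noncomputable def psdPt (G : SimpleGraph V) (k : ℕ) : ℕ :=
  sInf {t | ∃ B : Set V, IsPSDForcingSet G B ∧ B.ncard = k ∧ psdPropTime G B = t}

/-- The PSD propagation time `pt_+(G) = pt_+(G, Z_+(G))`. -/
noncomputable def psdPtG (G : SimpleGraph V) : ℕ := psdPt G (psdZ G)

/-- The PSD propagation time of `B` within the induced subgraph `G[U]` (for `B ⊆ U`),
realized by making the vertices outside `U` isolated and initially blue. -/
noncomputable def psdPropTimeOn (G : SimpleGraph V) (U B : Set V) : ℕ :=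
  psdPropTime (delVerts G Uᶜ) (B ∪ Uᶜ)

/-- The vertex set of the component of `G - B` containing the white vertex `w`. -/
def compOf (G : SimpleGraph V) (B : Set V) (w : V) : Set V :=
  {x | x ∉ B ∧ (delVerts G B).Reachable x w}

namespace SimpleGraph

variable {W : Type*} {G : SimpleGraph V}

lemma dist_lt_length_of_mem_support {u w z : V} {p : G.Walk u w} (hz : z ∈ p.support)
    (hzu : z ≠ u) : G.dist z w < p.length := by
  classical
  have hz' : z ∈ p.reverse.support := by simpa using hz
  calc G.dist z w = G.dist w z := dist_comm
    _ ≤ (p.reverse.takeUntil z hz').length := dist_le _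
    _ < p.reverse.length := Walk.length_takeUntil_lt_length hz' hzu
    _ = p.length := p.length_reverse

lemma exists_adj_of_dist_eq_add_one {v u : V} {t : ℕ} (h : G.dist v u = t + 1) :
    ∃ w, G.dist v w ≤ t ∧ G.Adj w u := by
  rw [dist_comm] at h
  obtain ⟨p, hp⟩ :=
    (Reachable.of_dist_ne_zero (by omega : G.dist u v ≠ 0)).exists_walk_length_eq_dist
  rw [h] at hp
  cases p with
  | nil => simp at hp
  | cons hadj q =>
    refine ⟨_, ?_, hadj.symm⟩
    rw [dist_comm, ← Nat.succ_inj.mp hp]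
    exact dist_le q

lemma Hom.edist_apply_le {G' : SimpleGraph W} (f : G →g G') (u v : V) :
    G'.edist (f u) (f v) ≤ G.edist u v := by
  by_cases h : G.Reachable u v
  · obtain ⟨p, hp⟩ := h.exists_walk_length_eq_edist
    rw [← hp]
    simpa using edist_le (p.map f)
  · rw [edist_eq_top_of_not_reachable h]
    exact le_top

lemma Connected.eccent_ne_top [Finite V] (hG : G.Connected) (v : V) : G.eccent v ≠ ⊤ := by
  obtain ⟨x, hx⟩ := G.exists_edist_eq_eccent_of_finite v
  rw [← hx]
  exact edist_ne_top_iff_reachable.mpr (hG v x)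

lemma IsAcyclic.isPath_append_cons (hG : G.IsAcyclic) {x v' v y : V} (hadj : G.Adj v' v)
    {p : G.Walk x v'} {q : G.Walk v y} (hp : p.IsPath) (hq : q.IsPath) (hvp : v ∉ p.support)
    (hv'q : v' ∉ q.support) : (p.append (.cons hadj q)).IsPath := by
  classical
  rw [Walk.isPath_def, Walk.support_append, Walk.support_cons, List.tail_cons]
  refine hp.support_nodup.append hq.support_nodup fun z hzp hzq => hv'q ?_
  have hv_drop : v ∉ (p.dropUntil z hzp).support :=
    fun h => hvp (p.support_dropUntil_subset_support hzp h)
  have := hG.mem_support_of_ne_mem_support_of_adj_of_isPath (hq.takeUntil hzq).reverse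
    (hp.dropUntil hzp) hadj.symm hv_drop
  exact q.support_takeUntil_subset_support hzq (by simpa using this)

theorem IsTree.two_mul_radius_le_card [Fintype V] (hG : G.IsTree) :
    2 * G.radius ≤ Fintype.card V := by
  have := hG.connected.nonempty
  have hdist (a b : V) : G.edist a b = G.dist a b := (hG.connected a b).coe_dist_eq_edist.symm
  obtain ⟨v, hv⟩ := G.exists_eccent_eq_radius
  obtain ⟨x, hx⟩ := G.exists_edist_eq_eccent_of_finite v
  obtain ⟨p, hp, hpl⟩ := hG.connected.exists_path_of_dist v x
  rw [← hv, ← hx, hdist]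
  cases p with
  | nil => simp
  | @cons _ v' _ hadj q =>
    obtain ⟨y, hy⟩ := G.exists_edist_eq_eccent_of_finite v'
    have hfar : G.dist v x ≤ G.dist v' y := by
      have : G.eccent v ≤ G.eccent v' := hv ▸ radius_le_eccent
      rwa [← hx, ← hy, hdist, hdist, Nat.cast_le] at this
    have hnear : G.dist v y ≤ G.dist v x := by
      have : G.edist v y ≤ G.eccent v := edist_le_eccent
      rwa [← hx, hdist, hdist, Nat.cast_le] at this
    have hy_side : G.dist v' y = G.dist v y + 1 := by
      have := hG.dist_eq_dist_add_one_of_adj y hadj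
      rw [G.dist_comm (u := y), G.dist_comm (u := y)] at this
      omega
    obtain ⟨s, hs, hsl⟩ := hG.connected.exists_path_of_dist v y
    have hv's : v' ∉ s.support := fun h => by
      have := dist_lt_length_of_mem_support h hadj.ne'
      omega
    obtain ⟨hq, hvq⟩ := (Walk.cons_isPath_iff hadj q).mp hp
    have hlong := (hG.isAcyclic.isPath_append_cons hadj.symm hq.reverse hs
      (by simpa using hvq) hv's).length_lt
    simp only [Walk.length_append, Walk.length_reverse, Walk.length_cons] at hlong hpl
    norm_cast
    omega

lemma pathGraph_sub_le_length {n : ℕ} {i j : Fin n} (p : (pathGraph n).Walk i j) :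
    (j : ℕ) - i ≤ p.length := by
  induction p with
  | nil => simp
  | cons hadj _ ih =>
    rw [pathGraph_adj] at hadj
    rw [Walk.length_cons]
    omega

lemma Iso.sub_one_le_ediam_of_pathGraph {n : ℕ} (f : G ≃g pathGraph n) :
    ((n - 1 : ℕ) : ℕ∞) ≤ G.ediam := by
  rcases n with _ | m
  · simp
  obtain ⟨p, hp⟩ := (pathGraph_connected m 0 (Fin.last m)).exists_walk_length_eq_edist
  calc ((m + 1 - 1 : ℕ) : ℕ∞) ≤ p.length := by exact_mod_cast pathGraph_sub_le_length p
    _ = (pathGraph (m + 1)).edist (f (f.symm 0)) (f (f.symm (Fin.last m))) := by simp [hp]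
    _ ≤ G.edist (f.symm 0) (f.symm (Fin.last m)) := f.toHom.edist_apply_le _ _
    _ ≤ G.ediam := edist_le_ediam

lemma delVerts_le (B : Set V) : delVerts G B ≤ G := fun _ _ h => h.1

lemma Walk.notMem_of_mem_support_delVerts {B : Set V} {x w y : V}
    (p : (delVerts G B).Walk x w) (hx : x ∉ B) (hy : y ∈ p.support) : y ∉ B := by
  induction p with
  | nil => simp_all
  | cons hadj _ ih =>
    rcases List.mem_cons.mp hy with rfl | hy
    exacts [hx, ih hadj.2.2 hy]

lemma IsAcyclic.psdStep_eq (hG : G.IsAcyclic) (B : Set V) :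
    psdStep G B = B ∪ {w | ∃ u ∈ B, G.Adj u w} := by
  ext w
  simp only [psdStep, PSDForce, mem_union, mem_ofPred_eq]
  constructor
  · rintro (hw | ⟨u, hu, -, hadj, -⟩)
    exacts [Or.inl hw, Or.inr ⟨u, hu, hadj⟩]
  · rintro (hw | ⟨u, hu, hadj⟩)
    · exact Or.inl hw
    by_cases hw : w ∈ B
    · exact Or.inl hw
    refine Or.inr ⟨u, hu, hw, hadj, fun x hux hx hxw => ?_⟩
    obtain ⟨q, hq, -⟩ := hxw.exists_path_of_dist
    have hu_q : u ∉ (q.mapLe (delVerts_le B)).support := by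
      rw [Walk.support_mapLe_eq_support]
      exact fun h => q.notMem_of_mem_support_delVerts hx h hu
    have := hG.mem_support_of_ne_mem_support_of_adj_of_isPath (Path.singleton hux.symm).2
      (hq.mapLe _) hadj hu_q
    simp only [Path.singleton, Walk.support_cons, Walk.support_nil, List.mem_cons,
      List.not_mem_nil, or_false] at this
    rcases this with rfl | rfl
    exacts [rfl, absurd hu hw]

lemma IsTree.psdStep_iterate_singleton (hG : G.IsTree) (v : V) (t : ℕ) :
    (psdStep G)^[t] {v} = {u | G.dist v u ≤ t} := by
  induction t with
  | zero => ext u; simp [hG.connected.dist_eq_zero_iff, eq_comm]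
  | succ t ih =>
    rw [Function.iterate_succ_apply', ih, hG.isAcyclic.psdStep_eq]
    ext u
    simp only [mem_union, mem_ofPred_eq]
    constructor
    · rintro (h | ⟨w, hw, hadj⟩)
      · omega
      · have := hG.connected.dist_triangle (u := v) (v := w) (w := u)
        rw [dist_eq_one_iff_adj.mpr hadj] at this
        omega
    · intro h
      obtain h | h := Nat.le_succ_iff.mp h
      exacts [Or.inl h, Or.inr (exists_adj_of_dist_eq_add_one h)]

lemma IsTree.psdStep_iterate_singleton_eq_univ_iff (hG : G.IsTree) (v : V) (t : ℕ) :
    (psdStep G)^[t] {v} = univ ↔ G.eccent v ≤ t := by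
  rw [hG.psdStep_iterate_singleton, eq_univ_iff_forall, eccent_le_iff]
  refine forall_congr' fun u => ?_
  rw [← (hG.connected v u).coe_dist_eq_edist, Nat.cast_le, mem_ofPred_eq]

lemma IsTree.natCast_psdPropTime_singleton [Finite V] (hG : G.IsTree) (v : V) :
    (psdPropTime G {v} : ℕ∞) = G.eccent v := by
  obtain ⟨d, hd⟩ := ENat.ne_top_iff_exists.mp (hG.connected.eccent_ne_top v)
  have : {t | (psdStep G)^[t] {v} = univ} = Ici d := by
    ext t
    rw [mem_ofPred_eq, hG.psdStep_iterate_singleton_eq_univ_iff, ← hd, Nat.cast_le, mem_Ici]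
  rw [psdPropTime, this, csInf_Ici, hd]

lemma IsTree.isPSDForcingSet_singleton [Finite V] (hG : G.IsTree) (v : V) :
    IsPSDForcingSet G {v} :=
  ⟨(G.eccent v).toNat, (hG.psdStep_iterate_singleton_eq_univ_iff v _).mpr
    (ENat.natCast_toNat (hG.connected.eccent_ne_top v)).ge⟩

lemma not_isPSDForcingSet_empty [Nonempty V] : ¬ IsPSDForcingSet G ∅ := by
  rintro ⟨t, ht⟩
  have hfix : psdStep G ∅ = ∅ := by simp [psdStep, PSDForce]
  rw [Function.iterate_fixed hfix] at ht
  exact empty_ne_univ ht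

lemma IsTree.psdZ_eq_one [Finite V] (hG : G.IsTree) : psdZ G = 1 := by
  have := hG.connected.nonempty
  have h1 : 1 ∈ {k | ∃ B : Set V, IsPSDForcingSet G B ∧ B.ncard = k} :=
    ⟨{Classical.arbitrary V}, hG.isPSDForcingSet_singleton _, ncard_singleton _⟩
  rw [psdZ]
  refine le_antisymm (Nat.sInf_le h1) (Nat.one_le_iff_ne_zero.mpr fun h0 => ?_)
  obtain ⟨B, hB, hB0⟩ := h0 ▸ Nat.sInf_mem ⟨1, h1⟩
  rw [ncard_eq_zero] at hB0
  exact not_isPSDForcingSet_empty (hB0 ▸ hB)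

lemma IsTree.psdPtG_eq_iInf [Finite V] (hG : G.IsTree) :
    psdPtG G = ⨅ v, psdPropTime G {v} := by
  rw [psdPtG, hG.psdZ_eq_one, psdPt, iInf]
  congr 1
  ext t
  simp only [mem_ofPred_eq, mem_range, ncard_eq_one]
  constructor
  · rintro ⟨B, -, ⟨v, rfl⟩, rfl⟩
    exact ⟨v, rfl⟩
  · rintro ⟨v, rfl⟩
    exact ⟨{v}, hG.isPSDForcingSet_singleton v, ⟨v, rfl⟩, rfl⟩

theorem IsTree.natCast_psdPtG [Finite V] (hG : G.IsTree) : (psdPtG G : ℕ∞) = G.radius := by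
  have := hG.connected.nonempty
  rw [hG.psdPtG_eq_iInf, ENat.natCast_iInf]
  exact iInf_congr hG.natCast_psdPropTime_singleton

end SimpleGraph

/-- if `T` is a tree of order `n` then `pt_+(T) ≤ ⌈(n-1)/2⌉`, with equality
when `T` is a path. -/
theorem stmt7 [Fintype V] (G : SimpleGraph V) (hT : G.IsTree) :
    psdPtG G ≤ (Fintype.card V - 1 + 1) / 2 ∧
    (Nonempty (G ≃g pathGraph (Fintype.card V)) →
      psdPtG G = (Fintype.card V - 1 + 1) / 2) := by
  have hn : 0 < Fintype.card V := Fintype.card_pos_iff.mpr hT.connected.nonempty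
  have hpt := hT.natCast_psdPtG
  have hupper : 2 * psdPtG G ≤ Fintype.card V := by
    exact_mod_cast hpt ▸ hT.two_mul_radius_le_card
  refine ⟨by omega, fun ⟨f⟩ => ?_⟩
  have hlower : Fintype.card V - 1 ≤ 2 * psdPtG G := by
    exact_mod_cast f.sub_one_le_ediam_of_pathGraph.trans (hpt ▸ ediam_le_two_mul_radius)
  omega
end

section
/- For every n ≥ k ≥ 1 (with n ≥ k + 3 when needed for the lollipop construction), there exists a graph G with |V(G)| = n, Z_+(G) = k, and pt_+(G) = ⌈(n − k)/2⌉; hence the bound pt_+(G) ≤ ⌈(|V(G)| − Z_+(G))/2⌉ is tight for each value of Z_+(G). -/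
open SimpleGraph Set

variable {V : Type*}

/-!
The witness is the path on `m = n - k + 1` vertices together with `k - 1` isolated vertices.
Since a vertex can only be forced by a neighbour, every PSD forcing set contains all isolated
vertices and at least one path vertex, so `Z_+ = k`, and the minimum forcing sets are the isolated
vertices plus one path vertex `c`. From `c` the blue set grows by one vertex on each side per round
(the white vertices beyond either end of the blue interval form one component), so the path turns
blue after `max(c, m - 1 - c)` rounds; this is smallest for the middle vertex, where it equals
`⌊m / 2⌋ = ⌈(n - k) / 2⌉`.
-/

section PSDForcing

variable {G : SimpleGraph V} {B : Set V}

lemma mem_psdStep {w : V} : w ∈ psdStep G B ↔ w ∈ B ∨ ∃ u, PSDForce G B u w :=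
  Iff.rfl

lemma exists_walk_of_mem_iterate_psdStep {t : ℕ} {x : V} (hx : x ∈ (psdStep G)^[t] B) :
    ∃ u ∈ B, ∃ p : G.Walk u x, p.length ≤ t := by
  induction t generalizing x with
  | zero => exact ⟨x, hx, .nil, le_rfl⟩
  | succ t ih =>
    rw [Function.iterate_succ_apply'] at hx
    rcases mem_psdStep.1 hx with hx | ⟨u, hu, -, hadj, -⟩
    · obtain ⟨v, hv, p, hp⟩ := ih hx
      exact ⟨v, hv, p, by omega⟩
    · obtain ⟨v, hv, p, hp⟩ := ih hu
      exact ⟨v, hv, p.concat hadj, by simp [hp]⟩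

lemma le_psdPropTime {T : ℕ} (hB : IsPSDForcingSet G B)
    (hmin : ∀ t, (psdStep G)^[t] B = univ → T ≤ t) : T ≤ psdPropTime G B :=
  le_csInf hB hmin

lemma psdZ_eq (hB : IsPSDForcingSet G B)
    (hmin : ∀ B', IsPSDForcingSet G B' → B.ncard ≤ B'.ncard) : psdZ G = B.ncard :=
  le_antisymm (Nat.sInf_le ⟨B, hB, rfl⟩) <| le_csInf ⟨_, B, hB, rfl⟩ <| by
    rintro _ ⟨B', hB', rfl⟩
    exact hmin B' hB'

lemma psdPt_eq (hB : IsPSDForcingSet G B)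
    (hmin : ∀ B', IsPSDForcingSet G B' → B'.ncard = B.ncard →
      psdPropTime G B ≤ psdPropTime G B') :
    psdPt G B.ncard = psdPropTime G B :=
  le_antisymm (Nat.sInf_le ⟨B, hB, rfl, rfl⟩) <| le_csInf ⟨_, B, hB, rfl, rfl⟩ <| by
    rintro _ ⟨B', hB', hcard, rfl⟩
    exact hmin B' hB' hcard

end PSDForcing

def prefixPath (n m : ℕ) : SimpleGraph (Fin n) where
  Adj a b := (a.val + 1 = b.val ∨ b.val + 1 = a.val) ∧ a.val < m ∧ b.val < m
  symm := ⟨fun _ _ ⟨h, ha, hb⟩ => ⟨h.symm, hb, ha⟩⟩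
  loopless := ⟨fun _ ⟨h, _, _⟩ => by omega⟩

def pathBall (n m c t : ℕ) : Set (Fin n) :=
  {x | m ≤ x.val ∨ (c ≤ x.val + t ∧ x.val ≤ c + t)}

section PrefixPath

variable {n m c t : ℕ}

lemma mem_pathBall {x : Fin n} :
    x ∈ pathBall n m c t ↔ m ≤ x.val ∨ (c ≤ x.val + t ∧ x.val ≤ c + t) :=
  Iff.rfl

lemma prefixPath_walk {u x : Fin n} (p : (prefixPath n m).Walk u x) :
    u = x ∨ (u.val < m ∧ x.val < m ∧ x.val ≤ u.val + p.length ∧ u.val ≤ x.val + p.length) := by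
  induction p with
  | nil => exact .inl rfl
  | cons h p ih =>
    simp only [Walk.length_cons]
    obtain ⟨hstep, hu, hv⟩ := h
    right
    rcases ih with rfl | ⟨-, hx, h₁, h₂⟩ <;> omega

lemma reachable_pathBall_compl {x w : Fin n}
    (h : (delVerts (prefixPath n m) (pathBall n m c t)).Reachable x w) :
    (c + t < w.val → c + t < x.val) ∧ (w.val + t < c → x.val + t < c) := by
  obtain ⟨p⟩ := h
  induction p with
  | nil => exact ⟨id, id⟩
  | cons h p ih =>
    obtain ⟨⟨hstep, -, -⟩, hx, -⟩ := h
    simp only [mem_pathBall, not_or, not_and, not_le] at hx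
    omega

lemma psdStep_pathBall (hc : c < m) (hm : m ≤ n) :
    psdStep (prefixPath n m) (pathBall n m c t) = pathBall n m c (t + 1) := by
  apply Subset.antisymm
  · rintro w (hw | ⟨u, hu, -, ⟨hstep, hum, hwm⟩, -⟩)
    · rw [mem_pathBall] at hw ⊢; omega
    · rw [mem_pathBall] at hu ⊢; omega
  · intro w hw
    have := w.isLt
    by_cases hwB : w ∈ pathBall n m c t
    · exact Or.inl hwB
    right
    have hwm : w.val < m := by rw [mem_pathBall] at hw hwB; omega
    rcases (by rw [mem_pathBall] at hw hwB; omega : w.val = c + t + 1 ∨ w.val + t + 1 = c)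
      with hval | hval
    · obtain ⟨u, hu⟩ : ∃ u : Fin n, u.val = c + t := ⟨⟨c + t, by omega⟩, rfl⟩
      refine ⟨u, by rw [mem_pathBall]; omega, hwB, ⟨by omega, by omega, hwm⟩, ?_⟩
      rintro x ⟨hstep, -, -⟩ - hreach
      have := (reachable_pathBall_compl hreach).1 (by omega)
      exact Fin.ext (by omega)
    · obtain ⟨u, hu⟩ : ∃ u : Fin n, u.val = w.val + 1 := ⟨⟨w.val + 1, by omega⟩, rfl⟩
      refine ⟨u, by rw [mem_pathBall]; omega, hwB, ⟨by omega, by omega, hwm⟩, ?_⟩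
      rintro x ⟨hstep, -, -⟩ - hreach
      have := (reachable_pathBall_compl hreach).2 (by omega)
      exact Fin.ext (by omega)

lemma iterate_psdStep_pathBall (hc : c < m) (hm : m ≤ n) (t : ℕ) :
    (psdStep (prefixPath n m))^[t] (pathBall n m c 0) = pathBall n m c t := by
  induction t with
  | zero => rfl
  | succ t ih => rw [Function.iterate_succ_apply', ih, psdStep_pathBall hc hm]

lemma pathBall_eq_univ_iff (hm₀ : 0 < m) (hm : m ≤ n) :
    pathBall n m c t = univ ↔ c ≤ t ∧ m - 1 ≤ c + t := by
  constructor
  · intro h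
    have h₀ : (⟨0, by omega⟩ : Fin n) ∈ pathBall n m c t := h ▸ mem_univ _
    have h₁ : (⟨m - 1, by omega⟩ : Fin n) ∈ pathBall n m c t := h ▸ mem_univ _
    rw [mem_pathBall] at h₀ h₁
    simp only at h₀ h₁
    omega
  · intro h
    ext x
    simp only [mem_pathBall, mem_univ, iff_true]
    omega

lemma ncard_pathBall_zero (hc : c < m) (hm : m ≤ n) :
    (pathBall n m c 0).ncard = n - m + 1 := by
  have himage : Fin.val '' pathBall n m c 0 = ↑(insert c (Finset.Ico m n)) := by
    ext i
    simp only [mem_image, mem_pathBall, Finset.coe_insert, Finset.coe_Ico, mem_insert_iff,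
      mem_Ico]
    constructor
    · rintro ⟨x, hx, rfl⟩; omega
    · intro hi; exact ⟨⟨i, by omega⟩, by simp only; omega, rfl⟩
  rw [← ncard_image_of_injective _ Fin.val_injective, himage, ncard_coe_finset,
    Finset.card_insert_of_notMem (by simp; omega), Nat.card_Ico]

lemma isPSDForcingSet_pathBall (hc : c < m) (hm : m ≤ n) :
    IsPSDForcingSet (prefixPath n m) (pathBall n m c 0) :=
  ⟨m, by rw [iterate_psdStep_pathBall hc hm, pathBall_eq_univ_iff (by omega) hm]; omega⟩

lemma le_psdPropTime_pathBall (hc : c < m) (hm : m ≤ n) :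
    m / 2 ≤ psdPropTime (prefixPath n m) (pathBall n m c 0) :=
  le_psdPropTime (isPSDForcingSet_pathBall hc hm) fun t ht => by
    rw [iterate_psdStep_pathBall hc hm, pathBall_eq_univ_iff (by omega) hm] at ht
    omega

lemma psdPropTime_pathBall_middle (hm₀ : 0 < m) (hm : m ≤ n) :
    psdPropTime (prefixPath n m) (pathBall n m ((m - 1) / 2) 0) = m / 2 := by
  have hc : (m - 1) / 2 < m := by omega
  refine le_antisymm (Nat.sInf_le ?_) (le_psdPropTime_pathBall hc hm)
  rw [mem_ofPred_eq, iterate_psdStep_pathBall hc hm, pathBall_eq_univ_iff hm₀ hm]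
  omega

lemma exists_pathBall_subset_of_isPSDForcingSet (hm₀ : 0 < m) (hm : m ≤ n) {B : Set (Fin n)}
    (hB : IsPSDForcingSet (prefixPath n m) B) : ∃ c < m, pathBall n m c 0 ⊆ B := by
  obtain ⟨t, ht⟩ := hB
  have hreach (x : Fin n) : ∃ u ∈ B, ∃ p : (prefixPath n m).Walk u x, p.length ≤ t :=
    exists_walk_of_mem_iterate_psdStep (ht ▸ mem_univ x)
  obtain ⟨u, hu, p, -⟩ := hreach ⟨0, by omega⟩
  have hum : u.val < m := by
    rcases prefixPath_walk p with rfl | ⟨hum, -⟩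
    · exact hm₀
    · exact hum
  refine ⟨u.val, hum, fun x hx => ?_⟩
  rw [mem_pathBall] at hx
  rcases hx with hx | hx
  · obtain ⟨v, hv, q, -⟩ := hreach x
    rcases prefixPath_walk q with rfl | ⟨-, hxm, -⟩
    · exact hv
    · omega
  · rwa [Fin.ext (by omega : x.val = u.val)]

lemma ncard_le_of_isPSDForcingSet (hm₀ : 0 < m) (hm : m ≤ n) {B : Set (Fin n)}
    (hB : IsPSDForcingSet (prefixPath n m) B) : n - m + 1 ≤ B.ncard := by
  obtain ⟨c, hc, hsub⟩ := exists_pathBall_subset_of_isPSDForcingSet hm₀ hm hB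
  rw [← ncard_pathBall_zero hc hm]
  exact ncard_le_ncard hsub

lemma exists_eq_pathBall_of_isPSDForcingSet (hm₀ : 0 < m) (hm : m ≤ n) {B : Set (Fin n)}
    (hB : IsPSDForcingSet (prefixPath n m) B) (hcard : B.ncard ≤ n - m + 1) :
    ∃ c < m, pathBall n m c 0 = B := by
  obtain ⟨c, hc, hsub⟩ := exists_pathBall_subset_of_isPSDForcingSet hm₀ hm hB
  exact ⟨c, hc, eq_of_subset_of_ncard_le hsub (by rwa [ncard_pathBall_zero hc hm])⟩

end PrefixPath

/-- for every `n ≥ k ≥ 1` there is a graph `G` of order `n` with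
`Z_+(G) = k` and `pt_+(G) = ⌈(n-k)/2⌉`; thus the bound
`pt_+(G) ≤ ⌈(|V(G)| - Z_+(G))/2⌉` is tight for each value of `Z_+(G)`. -/
theorem stmt18 (n k : ℕ) (hk : 1 ≤ k) (hkn : k ≤ n) :
    ∃ G : SimpleGraph (Fin n), psdZ G = k ∧ psdPtG G = (n - k + 1) / 2 := by
  set m := n - k + 1
  have hm₀ : 0 < m := by omega
  have hm : m ≤ n := by omega
  have hc : (m - 1) / 2 < m := by omega
  have hforcing := isPSDForcingSet_pathBall hc hm
  have hcard : (pathBall n m ((m - 1) / 2) 0).ncard = k := by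
    rw [ncard_pathBall_zero hc hm]; omega
  have hZ : psdZ (prefixPath n m) = k :=
    hcard ▸ psdZ_eq hforcing fun B hB => by
      have := ncard_le_of_isPSDForcingSet hm₀ hm hB
      omega
  refine ⟨prefixPath n m, hZ, ?_⟩
  rw [psdPtG, hZ, ← hcard, psdPt_eq hforcing fun B hB hBcard => ?_,
    psdPropTime_pathBall_middle hm₀ hm]
  obtain ⟨c, hc', rfl⟩ := exists_eq_pathBall_of_isPSDForcingSet hm₀ hm hB (by omega)
  rw [psdPropTime_pathBall_middle hm₀ hm]
  exact le_psdPropTime_pathBall hc' hm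
end
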